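/- arXiv:2409.11631 — 2 statements merged into one kernel-verified Lean document; each statement's English description precedes it below -/
import Mathlib

section
/- Let b ≠ c be positive reals, N > 0, x₀, y₀ > 0. Define z(t) = N − (x₀ + y₀)^(b/(b-c))·(x₀ + y₀e^((b-c)t))^(-c/(b-c)) and y(t) = y₀(1 + y₀/x₀)^(b/(b-c))(1 + (y₀/x₀)e^((b-c)t))^(-b/(b-c))e^((b-c)t). Then z is differentiable and z'(t) = c·y(t) for all t, provided additionally x₀ + y₀ = (x₀ + y₀)^(b/(b-c))·(x₀+y₀)^(-c/(b-c)) holds (which is automatic since b/(b-c) − c/(b-c) = 1). -/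
/-! The chain rule differentiates `z` with exponent `-c/(b-c) - 1 = -b/(b-c)`; dividing both
bases in `y` by `x₀` rewrites `y` as `y₀ e^{(b-c)t} (x₀+y₀)^{b/(b-c)} (x₀+y₀e^{(b-c)t})^{-b/(b-c)}`,
which is `z'/c`. -/

open Real

theorem hasDerivAt_add_mul_exp_rpow {x y k t : ℝ} (p : ℝ) (hpos : 0 < x + y * exp (k * t)) :
    HasDerivAt (fun s => (x + y * exp (k * s)) ^ p)
      (p * k * y * exp (k * t) * (x + y * exp (k * t)) ^ (p - 1)) t := by
  have hlin : HasDerivAt (fun s => k * s) k t := by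
    simpa using (hasDerivAt_id t).const_mul k
  have hinner : HasDerivAt (fun s => x + y * exp (k * s)) (y * (exp (k * t) * k)) t :=
    (hlin.exp.const_mul y).const_add x
  convert hinner.rpow_const (p := p) (Or.inl hpos.ne') using 1
  ring

theorem div_rpow_mul_div_rpow_neg {a u v : ℝ} (p : ℝ) (ha : 0 < a) (hu : 0 ≤ u) (hv : 0 < v) :
    (u / a) ^ p * (v / a) ^ (-p) = u ^ p * v ^ (-p) := by
  rw [div_rpow hu ha.le, div_rpow hv.le ha.le, rpow_neg ha.le, rpow_neg hv.le]
  have : 0 < a ^ p := rpow_pos_of_pos ha p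
  field_simp

theorem sir_removed_solves_ode_general
    (b c N x₀ y₀ : ℝ) (hbc : b ≠ c)
    (hx : 0 < x₀) (hy : 0 < y₀) :
    ∀ t : ℝ,
      HasDerivAt (fun t : ℝ =>
          N - (x₀ + y₀) ^ (b / (b - c)) *
            (x₀ + y₀ * Real.exp ((b - c) * t)) ^ (-(c / (b - c))))
        (c *
          (y₀ * (1 + y₀ / x₀) ^ (b / (b - c)) *
            (1 + (y₀ / x₀) * Real.exp ((b - c) * t)) ^ (-(b / (b - c))) *
            Real.exp ((b - c) * t))) t := by
  intro t
  set E := exp ((b - c) * t)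
  have hu : 0 < x₀ + y₀ * E := by positivity
  have hbc' : b - c ≠ 0 := sub_ne_zero.mpr hbc
  have hexponent : -(c / (b - c)) - 1 = -(b / (b - c)) := by field_simp; ring
  have hrescale : (1 + y₀ / x₀) ^ (b / (b - c)) * (1 + y₀ / x₀ * E) ^ (-(b / (b - c)))
      = (x₀ + y₀) ^ (b / (b - c)) * (x₀ + y₀ * E) ^ (-(b / (b - c))) := by
    rw [← div_rpow_mul_div_rpow_neg _ hx (by positivity) hu]
    congr 2 <;> field_simp
  refine (((hasDerivAt_add_mul_exp_rpow (-(c / (b - c))) hu).const_mul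
    ((x₀ + y₀) ^ (b / (b - c)))).const_sub N).congr_deriv ?_
  have hcoeff : -(c / (b - c)) * (b - c) = -c := by field_simp
  rw [hexponent, hcoeff]
  linear_combination (-(c * y₀ * E)) * hrescale

theorem sir_removed_solves_ode
    (b c N x₀ y₀ : ℝ) (hb : 0 < b) (hc : 0 < c) (hbc : b ≠ c) (hN : 0 < N)
    (hx : 0 < x₀) (hy : 0 < y₀)
    (hid : x₀ + y₀ = (x₀ + y₀) ^ (b / (b - c)) * (x₀ + y₀) ^ (-(c / (b - c)))) :
    ∀ t : ℝ,
      HasDerivAt (fun t : ℝ =>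
          N - (x₀ + y₀) ^ (b / (b - c)) *
            (x₀ + y₀ * Real.exp ((b - c) * t)) ^ (-(c / (b - c))))
        (c *
          (y₀ * (1 + y₀ / x₀) ^ (b / (b - c)) *
            (1 + (y₀ / x₀) * Real.exp ((b - c) * t)) ^ (-(b / (b - c))) *
            Real.exp ((b - c) * t))) t :=
  sir_removed_solves_ode_general b c N x₀ y₀ hbc hx hy
end

section
/- Let b > c > 0 and x, y > 0. The semigroup property holds for the closed-form SIR susceptible update: if F(x, y, Δ) = (x·u, y·u·e^((b-c)Δ)) where u = (1 + y/x)^(b/(b-c))(1 + (y/x)e^((b-c)Δ))^(-b/(b-c)), then F(F(x, y, Δ₁), Δ₂) = F(x, y, Δ₁ + Δ₂) for all Δ₁, Δ₂ ≥ 0. -/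
noncomputable def sirFlow (b c : ℝ) (p : ℝ × ℝ) (Δ : ℝ) : ℝ × ℝ :=
  let u := (1 + p.2 / p.1) ^ (b / (b - c)) *
    (1 + (p.2 / p.1) * Real.exp ((b - c) * Δ)) ^ (-(b / (b - c)))
  (p.1 * u, p.2 * u * Real.exp ((b - c) * Δ))

/-!
The flow rescales `x` and `y` by a common factor `u`, and multiplies the ratio `ρ = y / x` by
`e^{(b-c)Δ}`. In terms of `ρ`, the factor is `u(ρ, Δ) = (1 + ρ)^α (1 + ρ e^{(b-c)Δ})^{-α}` with
`α = b / (b - c)`, which satisfies the cocycle identity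
`u(ρ, Δ₁) u(ρ e^{(b-c)Δ₁}, Δ₂) = u(ρ, Δ₁ + Δ₂)`: the middle powers `(1 + ρ e^{(b-c)Δ₁})^{∓α}`
cancel.
-/

open Real

noncomputable def sirFactor (b c ρ Δ : ℝ) : ℝ :=
  (1 + ρ) ^ (b / (b - c)) * (1 + ρ * exp ((b - c) * Δ)) ^ (-(b / (b - c)))

theorem sirFlow_eq (b c : ℝ) (p : ℝ × ℝ) (Δ : ℝ) :
    sirFlow b c p Δ = (p.1 * sirFactor b c (p.2 / p.1) Δ,
      p.2 * sirFactor b c (p.2 / p.1) Δ * exp ((b - c) * Δ)) :=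
  rfl

section

variable {b c ρ : ℝ}

theorem sirFactor_pos (Δ : ℝ) (hρ : 0 ≤ ρ) : 0 < sirFactor b c ρ Δ :=
  mul_pos (rpow_pos_of_pos (by positivity) _) (rpow_pos_of_pos (by positivity) _)

theorem sirFlow_ratio {x y : ℝ} (Δ : ℝ) (hx : x ≠ 0) (hρ : 0 ≤ y / x) :
    (sirFlow b c (x, y) Δ).2 / (sirFlow b c (x, y) Δ).1 = y / x * exp ((b - c) * Δ) := by
  have hu := (sirFactor_pos (b := b) (c := c) Δ hρ).ne'
  simp only [sirFlow_eq]
  field_simp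

theorem rpow_mul_rpow_neg_mul_rpow_mul_rpow_neg (A C α : ℝ) {B : ℝ} (hB : 0 < B) :
    A ^ α * B ^ (-α) * (B ^ α * C ^ (-α)) = A ^ α * C ^ (-α) := by
  have hcancel : B ^ (-α) * B ^ α = 1 := by
    rw [← rpow_add hB, neg_add_cancel, rpow_zero]
  calc A ^ α * B ^ (-α) * (B ^ α * C ^ (-α))
      = A ^ α * (B ^ (-α) * B ^ α) * C ^ (-α) := by ring
    _ = A ^ α * C ^ (-α) := by rw [hcancel, mul_one]

theorem sirFactor_mul_sirFactor (Δ₁ Δ₂ : ℝ) (hρ : 0 ≤ ρ) :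
    sirFactor b c ρ Δ₁ * sirFactor b c (ρ * exp ((b - c) * Δ₁)) Δ₂ =
      sirFactor b c ρ (Δ₁ + Δ₂) := by
  have hexp : ρ * exp ((b - c) * Δ₁) * exp ((b - c) * Δ₂) = ρ * exp ((b - c) * (Δ₁ + Δ₂)) := by
    rw [mul_assoc, ← exp_add, mul_add]
  unfold sirFactor
  rw [hexp]
  exact rpow_mul_rpow_neg_mul_rpow_mul_rpow_neg _ _ _ (by positivity)

theorem sir_flow_semigroup_general
    (b c x y : ℝ) (hx : 0 < x) (hy : 0 < y) :
    ∀ Δ₁ Δ₂ : ℝ, 0 ≤ Δ₁ → 0 ≤ Δ₂ →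
      sirFlow b c (sirFlow b c (x, y) Δ₁) Δ₂ = sirFlow b c (x, y) (Δ₁ + Δ₂) := by
  intro Δ₁ Δ₂ _ _
  have hρ : 0 ≤ y / x := (div_pos hy hx).le
  rw [sirFlow_eq b c (sirFlow b c (x, y) Δ₁), sirFlow_ratio Δ₁ hx.ne' hρ]
  simp only [sirFlow_eq, ← sirFactor_mul_sirFactor Δ₁ Δ₂ hρ, mul_add, exp_add]
  ext <;> ring

theorem sir_flow_semigroup
    (b c x y : ℝ) (hc : 0 < c) (hcb : c < b) (hx : 0 < x) (hy : 0 < y) :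
    ∀ Δ₁ Δ₂ : ℝ, 0 ≤ Δ₁ → 0 ≤ Δ₂ →
      sirFlow b c (sirFlow b c (x, y) Δ₁) Δ₂ = sirFlow b c (x, y) (Δ₁ + Δ₂) :=
  sir_flow_semigroup_general b c x y hx hy
end
end
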